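/- Let d_x ∈ (0,1] satisfy the recurrence d_x = r_x·(p_x + q_x·d_{x−1}·d_x) for 0 < x, with q_x = 1 − p_x and r_x ∈ (0,1]. If t_x is defined by d_x = r_x·t_x/t_{x+1} with t_0, t_1 chosen consistently, then t satisfies the linear recurrence t_{x+1} = (1 + w_x)·t_x − w_x·r_x·r_{x−1}·t_{x−1}, equivalently (t_{x+1} − t_x) − w_x·(t_x − t_{x−1}) = w_x·(1 − r_{x−1}·r_x)·t_{x−1}, where w_x = q_x/p_x. -/

import Mathlib

/-- The substitution `d_x = r_x t_x / t_{x+1}` linearizes the Riccati-type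
recurrence for the discounted one-step-up expectations. -/
theorem stmt_14 (p q r w d t : ℕ → ℝ)
    (hp : ∀ x, 0 < p x ∧ p x < 1) (hq : ∀ x, q x = 1 - p x)
    (hr : ∀ x, 0 < r x ∧ r x ≤ 1)
    (hd : ∀ x, 0 < d x ∧ d x ≤ 1)
    (hw : ∀ x, w x = q x / p x)
    (hrec : ∀ x, 0 < x → d x = r x * (p x + q x * d (x - 1) * d x))
    (ht : ∀ x, t x ≠ 0)
    (hsub : ∀ x, d x = r x * t x / t (x + 1)) :
    ∀ x, 0 < x →
      t (x + 1) = (1 + w x) * t x - w x * r x * r (x - 1) * t (x - 1) ∧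
      (t (x + 1) - t x) - w x * (t x - t (x - 1)) =
        w x * (1 - r (x - 1) * r x) * t (x - 1) := by
  intro x hx
  have hxe : x - 1 + 1 = x := Nat.succ_pred_eq_of_pos hx
  have h1 := hrec x hx
  have h2 := hsub x
  have h3 := hsub (x - 1)
  rw [hxe] at h3
  rw [h2, h3] at h1
  have hpx : p x ≠ 0 := ne_of_gt (hp x).1
  have hrx : r x ≠ 0 := ne_of_gt (hr x).1
  have htx : t x ≠ 0 := ht x
  have htx1 : t (x + 1) ≠ 0 := ht (x + 1)
  have htxm : t (x - 1) ≠ 0 := ht (x - 1)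
  rw [hq x] at h1
  field_simp at h1
  have h4 : t x = p x * t (x + 1) + (1 - p x) * r x * r (x - 1) * t (x - 1) := by
    apply mul_left_cancel₀ (mul_ne_zero (mul_ne_zero hrx htx) htx1)
    linear_combination (r x * t x * t (x + 1)) * h1
  have key : t (x + 1) = (1 + w x) * t x - w x * r x * r (x - 1) * t (x - 1) := by
    rw [hw, hq]
    field_simp
    linear_combination -h4
  refine ⟨key, ?_⟩
  rw [key]; ring
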